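/- arXiv:2312.01469 — 9 statements merged into one kernel-verified Lean document; each statement's English description precedes it below -/
import Mathlib

section
/- Let V, a, ā, b, b̄, c, c̄ ∈ 𝔤 and μ₁, μ₂, μ₃ ∈ ℝ satisfy [V,a] = μ₁·ā, [V,ā] = −μ₁·a, [V,b] = μ₂·b̄, [V,b̄] = −μ₂·b, [V,c] = μ₃·c̄ and [V,c̄] = −μ₃·c. Then μ₃·Q([ā,b],c̄) + μ₂·Q([ā,b̄],c) − μ₁·Q([a,b],c) = 0 and μ₃·Q([a,b̄],c̄) + μ₁·Q([ā,b̄],c) − μ₂·Q([a,b],c) = 0. -/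
/-! The Leibniz rule for `ad V` makes the trilinear form `(x, y, z) ↦ Q ⁅x, y⁆ z` of an invariant
form `ad V`-invariant. Feeding it the triples `(ā, b, c)` and `(a, b̄, c)`, on which `ad V` acts by
the given rotations, gives the two relations. -/

theorem lie_lie_form_derivation_eq_zero {R L M : Type*} [CommRing R] [LieRing L] [LieAlgebra R L]
    [AddCommGroup M] [Module R M] (Q : L →ₗ[R] L →ₗ[R] M)
    (hinv : ∀ x y z : L, Q ⁅z, x⁆ y + Q x ⁅z, y⁆ = 0) (V x y z : L) :
    Q ⁅⁅V, x⁆, y⁆ z + Q ⁅x, ⁅V, y⁆⁆ z + Q ⁅x, y⁆ ⁅V, z⁆ = 0 := by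
  rw [← hinv ⁅x, y⁆ z V, leibniz_lie V x y, map_add, LinearMap.add_apply]

theorem jacobi_structure_constant_relations_general
    (𝔤 : Type*) [LieRing 𝔤] [LieAlgebra ℝ 𝔤]
    (Q : 𝔤 →ₗ[ℝ] 𝔤 →ₗ[ℝ] ℝ)
    (hinv : ∀ x y z : 𝔤, Q ⁅z, x⁆ y + Q x ⁅z, y⁆ = 0)
    (V a a' b b' c c' : 𝔤) (μ₁ μ₂ μ₃ : ℝ)
    (ha : ⁅V, a⁆ = μ₁ • a') (ha' : ⁅V, a'⁆ = (-μ₁) • a)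
    (hb : ⁅V, b⁆ = μ₂ • b') (hb' : ⁅V, b'⁆ = (-μ₂) • b)
    (hc : ⁅V, c⁆ = μ₃ • c') :
    μ₃ * Q ⁅a', b⁆ c' + μ₂ * Q ⁅a', b'⁆ c - μ₁ * Q ⁅a, b⁆ c = 0 ∧
    μ₃ * Q ⁅a, b'⁆ c' + μ₁ * Q ⁅a', b'⁆ c - μ₂ * Q ⁅a, b⁆ c = 0 := by
  have h₁ := lie_lie_form_derivation_eq_zero Q hinv V a' b c
  have h₂ := lie_lie_form_derivation_eq_zero Q hinv V a b' c
  rw [ha', hb, hc] at h₁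
  rw [ha, hb', hc] at h₂
  simp only [smul_lie, lie_smul, map_smul, LinearMap.smul_apply, smul_eq_mul] at h₁ h₂
  constructor <;> linarith

/-- Jacobi-identity relations between structure constants of a
normalizer-adapted decomposition. -/
theorem jacobi_structure_constant_relations
    (𝔤 : Type*) [LieRing 𝔤] [LieAlgebra ℝ 𝔤]
    (Q : 𝔤 →ₗ[ℝ] 𝔤 →ₗ[ℝ] ℝ)
    (hsymm : ∀ x y : 𝔤, Q x y = Q y x)
    (hinv : ∀ x y z : 𝔤, Q ⁅z, x⁆ y + Q x ⁅z, y⁆ = 0)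
    (V a a' b b' c c' : 𝔤) (μ₁ μ₂ μ₃ : ℝ)
    (ha : ⁅V, a⁆ = μ₁ • a') (ha' : ⁅V, a'⁆ = (-μ₁) • a)
    (hb : ⁅V, b⁆ = μ₂ • b') (hb' : ⁅V, b'⁆ = (-μ₂) • b)
    (hc : ⁅V, c⁆ = μ₃ • c') (hc' : ⁅V, c'⁆ = (-μ₃) • c) :
    μ₃ * Q ⁅a', b⁆ c' + μ₂ * Q ⁅a', b'⁆ c - μ₁ * Q ⁅a, b⁆ c = 0 ∧
    μ₃ * Q ⁅a, b'⁆ c' + μ₁ * Q ⁅a', b'⁆ c - μ₂ * Q ⁅a, b⁆ c = 0 :=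
  jacobi_structure_constant_relations_general 𝔤 Q hinv V a a' b b' c c' μ₁ μ₂ μ₃ ha ha' hb hb' hc
end

section
/- Let a, b, c ∈ ℝ with a > 0, b ≥ 0, c ≥ 0, and let (w, x, y, z) ∈ ℝ⁴ satisfy the six linear equations: a·w + (b−c)·x − a·y − (b−c)·z = 0; b·w − b·x + (a−c)·y − (a−c)·z = 0; c·w − (a−b)·x + (a−b)·y − c·z = 0; (a−b)·w − c·x + c·y − (a−b)·z = 0; (b−c)·w + a·x − (b−c)·y − a·z = 0; (a−c)·w − (a−c)·x + b·y − b·z = 0. Then: if b = 0 and c = a, we have w = x and y = z; if c = 0 and b = a, we have w = z and x = y; in all other cases w = x = y = z. -/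
/-!
With `v = w - x + y - z`, `u = w + x - y - z` and `t = w - x - y + z`, sums of four of the six
equations give `2a·v = 0`, `2b·u = 0`, `2(a - c)·u = 0`, `2c·t = 0` and `2(a - b)·t = 0`.
So `v = 0` always, `u = 0` unless `b = 0 = a - c`, and `t = 0` unless `c = 0 = a - b`;
the claimed equalities are exactly what the surviving relations among `u`, `v`, `t` say.
-/

theorem eq_zero_of_mul_eq_zero_of_mul_eq_zero {M₀ : Type*} [MulZeroClass M₀] [NoZeroDivisors M₀]
    {p q u : M₀} (hp : p * u = 0) (hq : q * u = 0) (h : p ≠ 0 ∨ q ≠ 0) : u = 0 :=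
  h.elim (fun hp0 => (mul_eq_zero.mp hp).resolve_left hp0)
    (fun hq0 => (mul_eq_zero.mp hq).resolve_left hq0)

section SquaredJacobi

variable {K : Type*} [Field K] [CharZero K] {a b c w x y z : K}

theorem sub_add_sub_eq_zero_of_squared_jacobi (ha : a ≠ 0)
    (h2 : b * w - b * x + (a - c) * y - (a - c) * z = 0)
    (h3 : c * w - (a - b) * x + (a - b) * y - c * z = 0)
    (h4 : (a - b) * w - c * x + c * y - (a - b) * z = 0)
    (h6 : (a - c) * w - (a - c) * x + b * y - b * z = 0) :
    w - x + y - z = 0 := by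
  have hv : (2 * a) * (w - x + y - z) = 0 := by linear_combination h2 + h3 + h4 + h6
  exact (mul_eq_zero.mp hv).resolve_left (mul_ne_zero two_ne_zero ha)

theorem add_sub_sub_eq_zero_of_squared_jacobi (hbc : b ≠ 0 ∨ c ≠ a)
    (h1 : a * w + (b - c) * x - a * y - (b - c) * z = 0)
    (h3 : c * w - (a - b) * x + (a - b) * y - c * z = 0)
    (h4 : (a - b) * w - c * x + c * y - (a - b) * z = 0)
    (h5 : (b - c) * w + a * x - (b - c) * y - a * z = 0) :
    w + x - y - z = 0 := by
  refine eq_zero_of_mul_eq_zero_of_mul_eq_zero (p := 2 * b) (q := 2 * (a - c))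
    (by linear_combination h1 + h5 + h3 - h4) (by linear_combination h1 + h5 - h3 + h4) ?_
  simpa [sub_eq_zero, eq_comm] using hbc

theorem sub_sub_add_eq_zero_of_squared_jacobi (hcb : c ≠ 0 ∨ b ≠ a)
    (h1 : a * w + (b - c) * x - a * y - (b - c) * z = 0)
    (h2 : b * w - b * x + (a - c) * y - (a - c) * z = 0)
    (h5 : (b - c) * w + a * x - (b - c) * y - a * z = 0)
    (h6 : (a - c) * w - (a - c) * x + b * y - b * z = 0) :
    w - x - y + z = 0 := by
  refine eq_zero_of_mul_eq_zero_of_mul_eq_zero (p := 2 * c) (q := 2 * (a - b))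
    (by linear_combination h1 - h5 + h2 - h6) (by linear_combination h1 - h5 - h2 + h6) ?_
  simpa [sub_eq_zero, eq_comm] using hcb

end SquaredJacobi

theorem structure_constant_linear_system_general
    (a b c w x y z : ℝ) (ha : 0 < a)
    (h1 : a * w + (b - c) * x - a * y - (b - c) * z = 0)
    (h2 : b * w - b * x + (a - c) * y - (a - c) * z = 0)
    (h3 : c * w - (a - b) * x + (a - b) * y - c * z = 0)
    (h4 : (a - b) * w - c * x + c * y - (a - b) * z = 0)
    (h5 : (b - c) * w + a * x - (b - c) * y - a * z = 0)
    (h6 : (a - c) * w - (a - c) * x + b * y - b * z = 0) :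
    (b = 0 ∧ c = a → w = x ∧ y = z) ∧
    (c = 0 ∧ b = a → w = z ∧ x = y) ∧
    (¬(b = 0 ∧ c = a) → ¬(c = 0 ∧ b = a) → w = x ∧ x = y ∧ y = z) := by
  have hv := sub_add_sub_eq_zero_of_squared_jacobi ha.ne' h2 h3 h4 h6
  refine ⟨?_, ?_, fun hbc hcb => ?_⟩
  · rintro ⟨rfl, rfl⟩
    have ht := sub_sub_add_eq_zero_of_squared_jacobi (Or.inl ha.ne') h1 h2 h5 h6
    exact ⟨by linear_combination (hv + ht) / 2, by linear_combination (hv - ht) / 2⟩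
  · rintro ⟨rfl, rfl⟩
    have hu := add_sub_sub_eq_zero_of_squared_jacobi (Or.inl ha.ne') h1 h3 h4 h5
    exact ⟨by linear_combination (hv + hu) / 2, by linear_combination (hu - hv) / 2⟩
  · have hu := add_sub_sub_eq_zero_of_squared_jacobi (not_and_or.mp hbc) h1 h3 h4 h5
    have ht := sub_sub_add_eq_zero_of_squared_jacobi (not_and_or.mp hcb) h1 h2 h5 h6
    exact ⟨by linear_combination (hv + ht) / 2, by linear_combination (hu - hv) / 2,
      by linear_combination (hv - ht) / 2⟩

/-- the linear-algebra core of the structure-constant lemma for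
normalizer-adapted decompositions. -/
theorem structure_constant_linear_system
    (a b c w x y z : ℝ) (ha : 0 < a) (hb : 0 ≤ b) (hc : 0 ≤ c)
    (h1 : a * w + (b - c) * x - a * y - (b - c) * z = 0)
    (h2 : b * w - b * x + (a - c) * y - (a - c) * z = 0)
    (h3 : c * w - (a - b) * x + (a - b) * y - c * z = 0)
    (h4 : (a - b) * w - c * x + c * y - (a - b) * z = 0)
    (h5 : (b - c) * w + a * x - (b - c) * y - a * z = 0)
    (h6 : (a - c) * w - (a - c) * x + b * y - b * z = 0) :
    (b = 0 ∧ c = a → w = x ∧ y = z) ∧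
    (c = 0 ∧ b = a → w = z ∧ x = y) ∧
    (¬(b = 0 ∧ c = a) → ¬(c = 0 ∧ b = a) → w = x ∧ x = y ∧ y = z) :=
  structure_constant_linear_system_general a b c w x y z ha h1 h2 h3 h4 h5 h6
end

section
/- If μ₁ ≠ 0 and μ₂ ≠ 0, then [ē f̄ h] = [e f h], i.e. Σ_{α,β,γ} Q([ē_α, f̄_β], h_γ)² = Σ_{α,β,γ} Q([e_α, f_β], h_γ)². -/
/-!
Since `ad V` is a derivation and `Q` is ad-invariant,
`Q ⁅⁅V, x⁆, y⁆ w + Q ⁅x, ⁅V, y⁆⁆ w + Q ⁅x, y⁆ ⁅V, w⁆ = 0`. As `ad V` rotates each pair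
`(u, ū)` by its speed `μᵢ`, this gives linear relations among the numbers `Q ⁅u α, v β⁆ (w γ)`
for fixed indices `α, β, γ`. Four of them already force
`μ₁ μ₂ (Q ⁅ē α, f̄ β⁆ (h γ)² - Q ⁅e α, f β⁆ (h γ)²) = 0`, so the sums agree term by term.
-/

section LieInvariant

variable {R L : Type*} [CommRing R] [LieRing L] [LieAlgebra R L]
  (Q : L →ₗ[R] L →ₗ[R] R) (hinv : ∀ x y z : L, Q ⁅z, x⁆ y + Q x ⁅z, y⁆ = 0)
include hinv

theorem lie_invariant_apply_lie_add_lie_add_lie (V x y w : L) :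
    Q ⁅⁅V, x⁆, y⁆ w + Q ⁅x, ⁅V, y⁆⁆ w + Q ⁅x, y⁆ ⁅V, w⁆ = 0 := by
  have h := hinv ⁅x, y⁆ w V
  rwa [leibniz_lie, map_add, LinearMap.add_apply] at h

theorem lie_invariant_of_lie_eq_smul {V x y w xb yb wb : L} {μx μy μw : R}
    (hx : ⁅V, x⁆ = μx • xb) (hy : ⁅V, y⁆ = μy • yb) (hw : ⁅V, w⁆ = μw • wb) :
    μx * Q ⁅xb, y⁆ w + μy * Q ⁅x, yb⁆ w + μw * Q ⁅x, y⁆ wb = 0 := by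
  simpa only [hx, hy, hw, smul_lie, lie_smul, map_smul, LinearMap.smul_apply, smul_eq_mul]
    using lie_invariant_apply_lie_add_lie_add_lie Q hinv V x y w

end LieInvariant

theorem sq_eq_sq_of_rotation_relations {K : Type*} [Field K] [NeZero (2 : K)]
    {μ₁ μ₂ μ₃ a b c d : K} (hμ₁ : μ₁ ≠ 0) (hμ₂ : μ₂ ≠ 0)
    (hb : μ₁ * b + μ₂ * c + -μ₃ * a = 0) (hd : -μ₁ * a + μ₂ * d + μ₃ * b = 0)
    (hc : μ₁ * d + -μ₂ * a + μ₃ * c = 0) (ha : -μ₁ * c + -μ₂ * b + -μ₃ * d = 0) :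
    d ^ 2 = a ^ 2 := by
  have key : 2 * μ₁ * μ₂ * (d ^ 2 - a ^ 2) = 0 := by
    linear_combination (μ₁ * c + μ₂ * b) * hb + (μ₁ * d + μ₂ * a) * hd +
      (μ₁ * a + μ₂ * d) * hc + (μ₁ * b + μ₂ * c) * ha
  have h2 : (2 : K) * μ₁ * μ₂ ≠ 0 := mul_ne_zero (mul_ne_zero two_ne_zero hμ₁) hμ₂
  exact sub_eq_zero.mp ((mul_eq_zero.mp key).resolve_left h2)

theorem structure_constants_bar_bar_eq_general
    (𝔤 : Type*) [LieRing 𝔤] [LieAlgebra ℝ 𝔤]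
    (Q : 𝔤 →ₗ[ℝ] 𝔤 →ₗ[ℝ] ℝ)
    (hinv : ∀ x y z : 𝔤, Q ⁅z, x⁆ y + Q x ⁅z, y⁆ = 0)
    (A B C : Type*) [Fintype A] [Fintype B] [Fintype C]
    (e eb : A → 𝔤) (f fb : B → 𝔤) (h hb : C → 𝔤)
    (V : 𝔤) (μ₁ μ₂ μ₃ : ℝ)
    (he : ∀ α, ⁅V, e α⁆ = μ₁ • eb α) (heb : ∀ α, ⁅V, eb α⁆ = (-μ₁) • e α)
    (hf : ∀ β, ⁅V, f β⁆ = μ₂ • fb β) (hfb : ∀ β, ⁅V, fb β⁆ = (-μ₂) • f β)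
    (hh : ∀ γ, ⁅V, h γ⁆ = μ₃ • hb γ) (hhb : ∀ γ, ⁅V, hb γ⁆ = (-μ₃) • h γ)
    (hμ₁ : μ₁ ≠ 0) (hμ₂ : μ₂ ≠ 0) :
    ∑ α, ∑ β, ∑ γ, (Q ⁅eb α, fb β⁆ (h γ)) ^ 2 =
      ∑ α, ∑ β, ∑ γ, (Q ⁅e α, f β⁆ (h γ)) ^ 2 := by
  refine Finset.sum_congr rfl fun α _ => Finset.sum_congr rfl fun β _ =>
    Finset.sum_congr rfl fun γ _ => ?_
  have hefhb := lie_invariant_of_lie_eq_smul Q hinv (he α) (hf β) (hhb γ)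
  have hebfh := lie_invariant_of_lie_eq_smul Q hinv (heb α) (hf β) (hh γ)
  have hefbh := lie_invariant_of_lie_eq_smul Q hinv (he α) (hfb β) (hh γ)
  have hebfbhb := lie_invariant_of_lie_eq_smul Q hinv (heb α) (hfb β) (hhb γ)
  exact sq_eq_sq_of_rotation_relations hμ₁ hμ₂ hefhb hebfh hefbh hebfbhb

/-- `[φ_p(i) φ_p(j) k] = [ijk]` when both rotation speeds `μ₁, μ₂`
are nonzero. -/
theorem structure_constants_bar_bar_eq
    (𝔤 : Type*) [LieRing 𝔤] [LieAlgebra ℝ 𝔤]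
    (Q : 𝔤 →ₗ[ℝ] 𝔤 →ₗ[ℝ] ℝ)
    (hsymm : ∀ x y : 𝔤, Q x y = Q y x)
    (hinv : ∀ x y z : 𝔤, Q ⁅z, x⁆ y + Q x ⁅z, y⁆ = 0)
    (A B C : Type*) [Fintype A] [Fintype B] [Fintype C]
    (e eb : A → 𝔤) (f fb : B → 𝔤) (h hb : C → 𝔤)
    (V : 𝔤) (μ₁ μ₂ μ₃ : ℝ)
    (he : ∀ α, ⁅V, e α⁆ = μ₁ • eb α) (heb : ∀ α, ⁅V, eb α⁆ = (-μ₁) • e α)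
    (hf : ∀ β, ⁅V, f β⁆ = μ₂ • fb β) (hfb : ∀ β, ⁅V, fb β⁆ = (-μ₂) • f β)
    (hh : ∀ γ, ⁅V, h γ⁆ = μ₃ • hb γ) (hhb : ∀ γ, ⁅V, hb γ⁆ = (-μ₃) • h γ)
    (hμ₁ : μ₁ ≠ 0) (hμ₂ : μ₂ ≠ 0) :
    ∑ α, ∑ β, ∑ γ, (Q ⁅eb α, fb β⁆ (h γ)) ^ 2 =
      ∑ α, ∑ β, ∑ γ, (Q ⁅e α, f β⁆ (h γ)) ^ 2 :=
  structure_constants_bar_bar_eq_general 𝔤 Q hinv A B C e eb f fb h hb V μ₁ μ₂ μ₃ he heb hf hfb hh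
    hhb hμ₁ hμ₂
end

section
/- If μ₁ ≠ 0 and μ₂ = μ₃ = 0 (so [V, f_β] = 0 and [V, h_γ] = 0 for all β, γ), then [ē f h] = [e f h], i.e. Σ_{α,β,γ} Q([ē_α, f_β], h_γ)² = Σ_{α,β,γ} Q([e_α, f_β], h_γ)². -/
/-!
Both sides vanish. Since `ad V` kills `f_β` and is a derivation, it maps `[e_α, f_β]` to
`μ₁ [ē_α, f_β]` and `[ē_α, f_β]` to `-μ₁ [e_α, f_β]`; by invariance
`Q(ad V x, h_γ) = -Q(x, [V, h_γ]) = 0`, so `μ₁ ≠ 0` forces `Q([ē_α, f_β], h_γ) = Q([e_α, f_β], h_γ) = 0`.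
-/

namespace LinearMap.BilinForm

variable {R L M : Type*} [CommRing R] [LieRing L] [AddCommGroup M] [Module R M]
  [LieRingModule L M] {Q : LinearMap.BilinForm R M}

theorem lieInvariant_of_apply_lie_add_apply_lie_eq_zero
    (hQ : ∀ x y : M, ∀ z : L, Q ⁅z, x⁆ y + Q x ⁅z, y⁆ = 0) : Q.lieInvariant L :=
  fun z x y => eq_neg_of_add_eq_zero_left (hQ x y z)

theorem apply_lie_eq_zero_of_lie_eq_zero (hQ : Q.lieInvariant L) {V : L} {y : M}
    (hy : ⁅V, y⁆ = 0) (x : M) : Q ⁅V, x⁆ y = 0 := by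
  rw [hQ, hy, map_zero, neg_zero]

theorem apply_lie_eq_zero_of_lie_eq_smul [NoZeroDivisors R] [LieAlgebra R L] [LieModule R L M]
    (hQ : Q.lieInvariant L) {V u u' : L} {v w : M} {c : R} (hc : c ≠ 0)
    (hu : ⁅V, u⁆ = c • u') (hv : ⁅V, v⁆ = 0) (hw : ⁅V, w⁆ = 0) : Q ⁅u', v⁆ w = 0 := by
  have hV : ⁅V, ⁅u, v⁆⁆ = c • ⁅u', v⁆ := by
    rw [leibniz_lie, hu, hv, lie_zero, add_zero, smul_lie]
  have hzero := apply_lie_eq_zero_of_lie_eq_zero hQ hw ⁅u, v⁆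
  rw [hV, map_smul, LinearMap.smul_apply, smul_eq_mul] at hzero
  exact (mul_eq_zero.mp hzero).resolve_left hc

end LinearMap.BilinForm

theorem structure_constants_bar_fixed_eq_general
    (𝔤 : Type*) [LieRing 𝔤] [LieAlgebra ℝ 𝔤]
    (Q : 𝔤 →ₗ[ℝ] 𝔤 →ₗ[ℝ] ℝ)
    (hinv : ∀ x y z : 𝔤, Q ⁅z, x⁆ y + Q x ⁅z, y⁆ = 0)
    (A B C : Type*) [Fintype A] [Fintype B] [Fintype C]
    (e eb : A → 𝔤) (f : B → 𝔤) (h : C → 𝔤)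
    (V : 𝔤) (μ₁ : ℝ)
    (he : ∀ α, ⁅V, e α⁆ = μ₁ • eb α) (heb : ∀ α, ⁅V, eb α⁆ = (-μ₁) • e α)
    (hμ₁ : μ₁ ≠ 0)
    (hf0 : ∀ β, ⁅V, f β⁆ = 0) (hh0 : ∀ γ, ⁅V, h γ⁆ = 0) :
    ∑ α, ∑ β, ∑ γ, (Q ⁅eb α, f β⁆ (h γ)) ^ 2 =
      ∑ α, ∑ β, ∑ γ, (Q ⁅e α, f β⁆ (h γ)) ^ 2 := by
  have hQ : LinearMap.BilinForm.lieInvariant 𝔤 Q :=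
    LinearMap.BilinForm.lieInvariant_of_apply_lie_add_apply_lie_eq_zero hinv
  have heb_zero : ∀ α β γ, Q ⁅eb α, f β⁆ (h γ) = 0 := fun α β γ =>
    LinearMap.BilinForm.apply_lie_eq_zero_of_lie_eq_smul hQ hμ₁ (he α) (hf0 β) (hh0 γ)
  have he_zero : ∀ α β γ, Q ⁅e α, f β⁆ (h γ) = 0 := fun α β γ =>
    LinearMap.BilinForm.apply_lie_eq_zero_of_lie_eq_smul hQ (neg_ne_zero.mpr hμ₁) (heb α) (hf0 β)
      (hh0 γ)
  simp only [heb_zero, he_zero]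

/-- `[φ_p(i) j k] = [ijk]` when `j, k` lie in the index set on which
`ad(V_p)` acts trivially. -/
theorem structure_constants_bar_fixed_eq
    (𝔤 : Type*) [LieRing 𝔤] [LieAlgebra ℝ 𝔤]
    (Q : 𝔤 →ₗ[ℝ] 𝔤 →ₗ[ℝ] ℝ)
    (hsymm : ∀ x y : 𝔤, Q x y = Q y x)
    (hinv : ∀ x y z : 𝔤, Q ⁅z, x⁆ y + Q x ⁅z, y⁆ = 0)
    (A B C : Type*) [Fintype A] [Fintype B] [Fintype C]
    (e eb : A → 𝔤) (f fb : B → 𝔤) (h hb : C → 𝔤)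
    (V : 𝔤) (μ₁ μ₂ μ₃ : ℝ)
    (he : ∀ α, ⁅V, e α⁆ = μ₁ • eb α) (heb : ∀ α, ⁅V, eb α⁆ = (-μ₁) • e α)
    (hf : ∀ β, ⁅V, f β⁆ = μ₂ • fb β) (hfb : ∀ β, ⁅V, fb β⁆ = (-μ₂) • f β)
    (hh : ∀ γ, ⁅V, h γ⁆ = μ₃ • hb γ) (hhb : ∀ γ, ⁅V, hb γ⁆ = (-μ₃) • h γ)
    (hμ₁ : μ₁ ≠ 0) (hμ₂ : μ₂ = 0) (hμ₃ : μ₃ = 0)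
    (hf0 : ∀ β, ⁅V, f β⁆ = 0) (hh0 : ∀ γ, ⁅V, h γ⁆ = 0) :
    ∑ α, ∑ β, ∑ γ, (Q ⁅eb α, f β⁆ (h γ)) ^ 2 =
      ∑ α, ∑ β, ∑ γ, (Q ⁅e α, f β⁆ (h γ)) ^ 2 :=
  structure_constants_bar_fixed_eq_general 𝔤 Q hinv A B C e eb f h V μ₁ he heb hμ₁ hf0 hh0
end

section
/- For arbitrary μ₁, μ₂, μ₃ ∈ ℝ, the following identity holds: μ₃²·[ē f h̄] − μ₂²·[ē f̄ h] − μ₁²·[e f h] = μ₃²·[e f̄ h̄] − μ₁²·[ē f̄ h] − μ₂²·[e f h]. -/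
/-!
Differentiating the invariance of `Q` along `ad V` turns each structure constant `Q ⁅u, v⁆ w`
into a linear relation between the constants with one barred slot swapped. With
`a = Q ⁅e, f⁆ h`, `b = Q ⁅ē, f̄⁆ h`, `c = Q ⁅ē, f⁆ h̄`, `d = Q ⁅e, f̄⁆ h̄` this gives
`μ₃ c = μ₁ a - μ₂ b` and `μ₃ d = μ₂ a - μ₁ b`; squaring, both sides of the identity equal
`-2 μ₁ μ₂ a b` term by term.
-/

section InvariantForm

variable {R L : Type*} [CommRing R] [LieRing L] [LieAlgebra R L]
  {Q : L →ₗ[R] L →ₗ[R] R} (hQ : ∀ x y z : L, Q ⁅z, x⁆ y + Q x ⁅z, y⁆ = 0)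
include hQ

theorem invariant_form_leibniz (x y z w : L) :
    Q ⁅⁅z, x⁆, y⁆ w + Q ⁅x, ⁅z, y⁆⁆ w + Q ⁅x, y⁆ ⁅z, w⁆ = 0 := by
  have := hQ ⁅x, y⁆ w z
  rwa [leibniz_lie, map_add, LinearMap.add_apply] at this

theorem invariant_form_leibniz_of_lie_eq_smul {V x x' y y' w w' : L} {s t r : R}
    (hx : ⁅V, x⁆ = s • x') (hy : ⁅V, y⁆ = t • y') (hw : ⁅V, w⁆ = r • w') :
    s * Q ⁅x', y⁆ w + t * Q ⁅x, y'⁆ w + r * Q ⁅x, y⁆ w' = 0 := by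
  simpa only [hx, hy, hw, smul_lie, lie_smul, map_smul, LinearMap.smul_apply, smul_eq_mul]
    using invariant_form_leibniz hQ x y V w

end InvariantForm

theorem sq_sub_sq_sub_sq_eq_of_linear_relations {R : Type*} [CommRing R]
    {μ₁ μ₂ μ₃ a b c d : R} (hc : μ₃ * c = μ₁ * a - μ₂ * b) (hd : μ₃ * d = μ₂ * a - μ₁ * b) :
    μ₃ ^ 2 * c ^ 2 - μ₂ ^ 2 * b ^ 2 - μ₁ ^ 2 * a ^ 2
      = μ₃ ^ 2 * d ^ 2 - μ₁ ^ 2 * b ^ 2 - μ₂ ^ 2 * a ^ 2 := by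
  linear_combination (μ₃ * c + μ₁ * a - μ₂ * b) * hc - (μ₃ * d + μ₂ * a - μ₁ * b) * hd

theorem squared_jacobi_identity_general
    (𝔤 : Type*) [LieRing 𝔤] [LieAlgebra ℝ 𝔤]
    (Q : 𝔤 →ₗ[ℝ] 𝔤 →ₗ[ℝ] ℝ)
    (hinv : ∀ x y z : 𝔤, Q ⁅z, x⁆ y + Q x ⁅z, y⁆ = 0)
    (A B C : Type*) [Fintype A] [Fintype B] [Fintype C]
    (e eb : A → 𝔤) (f fb : B → 𝔤) (h hb : C → 𝔤)
    (V : 𝔤) (μ₁ μ₂ μ₃ : ℝ)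
    (he : ∀ α, ⁅V, e α⁆ = μ₁ • eb α) (heb : ∀ α, ⁅V, eb α⁆ = (-μ₁) • e α)
    (hf : ∀ β, ⁅V, f β⁆ = μ₂ • fb β) (hfb : ∀ β, ⁅V, fb β⁆ = (-μ₂) • f β)
    (hh : ∀ γ, ⁅V, h γ⁆ = μ₃ • hb γ) :
    μ₃ ^ 2 * (∑ α, ∑ β, ∑ γ, (Q ⁅eb α, f β⁆ (hb γ)) ^ 2)
      - μ₂ ^ 2 * (∑ α, ∑ β, ∑ γ, (Q ⁅eb α, fb β⁆ (h γ)) ^ 2)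
      - μ₁ ^ 2 * (∑ α, ∑ β, ∑ γ, (Q ⁅e α, f β⁆ (h γ)) ^ 2) =
    μ₃ ^ 2 * (∑ α, ∑ β, ∑ γ, (Q ⁅e α, fb β⁆ (hb γ)) ^ 2)
      - μ₁ ^ 2 * (∑ α, ∑ β, ∑ γ, (Q ⁅eb α, fb β⁆ (h γ)) ^ 2)
      - μ₂ ^ 2 * (∑ α, ∑ β, ∑ γ, (Q ⁅e α, f β⁆ (h γ)) ^ 2) := by
  simp only [Finset.mul_sum, ← Finset.sum_sub_distrib]
  refine Finset.sum_congr rfl fun α _ => Finset.sum_congr rfl fun β _ =>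
    Finset.sum_congr rfl fun γ _ => sq_sub_sq_sub_sq_eq_of_linear_relations ?_ ?_
  · linear_combination invariant_form_leibniz_of_lie_eq_smul hinv (heb α) (hf β) (hh γ)
  · linear_combination invariant_form_leibniz_of_lie_eq_smul hinv (he α) (hfb β) (hh γ)

/-- the squared-Jacobi identity relating barred and unbarred
structure constants of a normalizer-adapted decomposition. -/
theorem squared_jacobi_identity
    (𝔤 : Type*) [LieRing 𝔤] [LieAlgebra ℝ 𝔤]
    (Q : 𝔤 →ₗ[ℝ] 𝔤 →ₗ[ℝ] ℝ)
    (hsymm : ∀ x y : 𝔤, Q x y = Q y x)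
    (hinv : ∀ x y z : 𝔤, Q ⁅z, x⁆ y + Q x ⁅z, y⁆ = 0)
    (A B C : Type*) [Fintype A] [Fintype B] [Fintype C]
    (e eb : A → 𝔤) (f fb : B → 𝔤) (h hb : C → 𝔤)
    (V : 𝔤) (μ₁ μ₂ μ₃ : ℝ)
    (he : ∀ α, ⁅V, e α⁆ = μ₁ • eb α) (heb : ∀ α, ⁅V, eb α⁆ = (-μ₁) • e α)
    (hf : ∀ β, ⁅V, f β⁆ = μ₂ • fb β) (hfb : ∀ β, ⁅V, fb β⁆ = (-μ₂) • f β)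
    (hh : ∀ γ, ⁅V, h γ⁆ = μ₃ • hb γ) (hhb : ∀ γ, ⁅V, hb γ⁆ = (-μ₃) • h γ) :
    μ₃ ^ 2 * (∑ α, ∑ β, ∑ γ, (Q ⁅eb α, f β⁆ (hb γ)) ^ 2)
      - μ₂ ^ 2 * (∑ α, ∑ β, ∑ γ, (Q ⁅eb α, fb β⁆ (h γ)) ^ 2)
      - μ₁ ^ 2 * (∑ α, ∑ β, ∑ γ, (Q ⁅e α, f β⁆ (h γ)) ^ 2) =
    μ₃ ^ 2 * (∑ α, ∑ β, ∑ γ, (Q ⁅e α, fb β⁆ (hb γ)) ^ 2)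
      - μ₁ ^ 2 * (∑ α, ∑ β, ∑ γ, (Q ⁅eb α, fb β⁆ (h γ)) ^ 2)
      - μ₂ ^ 2 * (∑ α, ∑ β, ∑ γ, (Q ⁅e α, f β⁆ (h γ)) ^ 2) :=
  squared_jacobi_identity_general 𝔤 Q hinv A B C e eb f fb h hb V μ₁ μ₂ μ₃ he heb hf hfb hh
end

section
/- Fix indices i and j. Suppose there exists an index j₀ such that span{[V,X] : X ∈ m_i} ∩ m_{j₀} ≠ {0}, and suppose there exist X ∈ m_i and Y ∈ m_j with Q([V,X], Y) ≠ 0. Then span{[V,X] : X ∈ m_i} = m_j, and consequently Q([V,X'], Z) = 0 for every X' ∈ m_i and every Z ∈ m_k with k ≠ j. -/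
/-!
The image `W` of `m i` under `ad V` is `𝔥`-invariant and, by Schur's argument, irreducible or zero,
because `ad V` commutes with `ad 𝔥`. Two irreducible invariant subspaces meeting nontrivially
coincide, so `W = m j₀`; a nonzero pairing of `W` with `m j` then forces `j₀ = j` by orthogonality.
-/

namespace Submodule

variable {R L : Type*} [CommRing R] [LieRing L] [LieAlgebra R L] (𝔥 : LieSubalgebra R L)

def IsLieStable (U : Submodule R L) : Prop :=
  ∀ H ∈ 𝔥, ∀ u ∈ U, ⁅H, u⁆ ∈ U

def IsLieIrreducible (U : Submodule R L) : Prop :=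
  ∀ W : Submodule R L, W ≤ U → W.IsLieStable 𝔥 → W = ⊥ ∨ W = U

variable {𝔥} {U W : Submodule R L} {f : L →ₗ[R] L}

theorem IsLieStable.inf (hU : U.IsLieStable 𝔥) (hW : W.IsLieStable 𝔥) :
    (U ⊓ W).IsLieStable 𝔥 :=
  fun H hH _ ⟨huU, huW⟩ => ⟨hU H hH _ huU, hW H hH _ huW⟩

theorem IsLieStable.map (hf : ∀ H ∈ 𝔥, ∀ x, ⁅H, f x⁆ = f ⁅H, x⁆) (hU : U.IsLieStable 𝔥) :
    (U.map f).IsLieStable 𝔥 := by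
  rintro H hH _ ⟨x, hx, rfl⟩
  exact hf H hH x ▸ mem_map_of_mem (hU H hH x hx)

theorem IsLieStable.comap (hf : ∀ H ∈ 𝔥, ∀ x, ⁅H, f x⁆ = f ⁅H, x⁆) (hU : U.IsLieStable 𝔥) :
    (U.comap f).IsLieStable 𝔥 := by
  intro H hH x hx
  rw [mem_comap, ← hf H hH x]
  exact hU H hH _ hx

theorem IsLieIrreducible.map (hf : ∀ H ∈ 𝔥, ∀ x, ⁅H, f x⁆ = f ⁅H, x⁆)
    (hU : U.IsLieIrreducible 𝔥) (hUs : U.IsLieStable 𝔥) : (U.map f).IsLieIrreducible 𝔥 := by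
  intro W hWU hWs
  rcases hU (U ⊓ W.comap f) inf_le_left (hUs.inf (hWs.comap hf)) with hbot | htop
  · left
    rw [eq_bot_iff]
    intro w hw
    obtain ⟨x, hx, rfl⟩ := hWU hw
    have hx0 : x = 0 := (mem_bot R).1 (hbot ▸ ⟨hx, hw⟩)
    simp [hx0]
  · right
    refine le_antisymm hWU ?_
    rw [map_le_iff_le_comap]
    exact htop ▸ inf_le_right

theorem IsLieIrreducible.eq_of_inf_ne_bot (hU : U.IsLieIrreducible 𝔥) (hW : W.IsLieIrreducible 𝔥)
    (hUs : U.IsLieStable 𝔥) (hWs : W.IsLieStable 𝔥) (hUW : U ⊓ W ≠ ⊥) : U = W := by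
  have hUW_eq_U := (hU _ inf_le_left (hUs.inf hWs)).resolve_left hUW
  have hUW_eq_W := (hW _ inf_le_right (hUs.inf hWs)).resolve_left hUW
  exact hUW_eq_U.symm.trans hUW_eq_W

theorem span_setOf_exists_mem_eq_apply (p : Submodule R L) (f : L →ₗ[R] L) :
    span R {w | ∃ x ∈ p, w = f x} = p.map f := by
  rw [← span_eq p, map_span, span_eq]
  congr 1
  ext w
  exact ⟨fun ⟨x, hx, hw⟩ => ⟨x, hx, hw.symm⟩, fun ⟨x, hx, hw⟩ => ⟨x, hx, hw.symm⟩⟩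

end Submodule

theorem lie_lie_comm_of_lie_eq_zero {L : Type*} [LieRing L] {H V : L} (h : ⁅H, V⁆ = 0) (x : L) :
    ⁅H, ⁅V, x⁆⁆ = ⁅V, ⁅H, x⁆⁆ := by
  rw [leibniz_lie, h, zero_lie, zero_add]

open Submodule in
theorem ad_image_unique_target_general
    (𝔤 : Type*) [LieRing 𝔤] [LieAlgebra ℝ 𝔤]
    (Q : 𝔤 →ₗ[ℝ] 𝔤 →ₗ[ℝ] ℝ)
    (𝔥 : LieSubalgebra ℝ 𝔤)
    (ℓ : ℕ) (m : Fin ℓ → Submodule ℝ 𝔤)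
    (horth : ∀ k k', k ≠ k' → ∀ x ∈ m k, ∀ y ∈ m k', Q x y = 0)
    (hinvar : ∀ k, ∀ H ∈ 𝔥, ∀ x ∈ m k, ⁅H, x⁆ ∈ m k)
    (hirr : ∀ k, ∀ U : Submodule ℝ 𝔤, U ≤ m k →
      (∀ H ∈ 𝔥, ∀ u ∈ U, ⁅H, u⁆ ∈ U) → U = ⊥ ∨ U = m k)
    (V : 𝔤) (hV : ∀ H ∈ 𝔥, ⁅H, V⁆ = 0)
    (i j : Fin ℓ)
    (hj₀ : ∃ j₀ : Fin ℓ,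
      Submodule.span ℝ {w : 𝔤 | ∃ x ∈ m i, w = ⁅V, x⁆} ⊓ m j₀ ≠ ⊥)
    (hij : ∃ X ∈ m i, ∃ Y ∈ m j, Q ⁅V, X⁆ Y ≠ 0) :
    Submodule.span ℝ {w : 𝔤 | ∃ x ∈ m i, w = ⁅V, x⁆} = m j ∧
    ∀ X' ∈ m i, ∀ k : Fin ℓ, k ≠ j → ∀ Z ∈ m k, Q ⁅V, X'⁆ Z = 0 := by
  obtain ⟨j₀, hj₀⟩ := hj₀
  obtain ⟨X, hX, Y, hY, hXY⟩ := hij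
  have hcomm : ∀ H ∈ 𝔥, ∀ x, ⁅H, LieAlgebra.ad ℝ 𝔤 V x⁆ = LieAlgebra.ad ℝ 𝔤 V ⁅H, x⁆ :=
    fun H hH => lie_lie_comm_of_lie_eq_zero (hV H hH)
  have hspan : span ℝ {w | ∃ x ∈ m i, w = ⁅V, x⁆} = (m i).map (LieAlgebra.ad ℝ 𝔤 V) :=
    span_setOf_exists_mem_eq_apply (m i) (LieAlgebra.ad ℝ 𝔤 V)
  rw [hspan] at hj₀ ⊢
  have himage_eq : (m i).map (LieAlgebra.ad ℝ 𝔤 V) = m j₀ :=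
    IsLieIrreducible.eq_of_inf_ne_bot (IsLieIrreducible.map hcomm (hirr i) (hinvar i)) (hirr j₀)
      (IsLieStable.map hcomm (hinvar i)) (hinvar j₀) hj₀
  have hmem : ∀ X' ∈ m i, ⁅V, X'⁆ ∈ m j₀ := fun X' hX' => himage_eq ▸ mem_map_of_mem hX'
  obtain rfl : j₀ = j := by
    by_contra hne
    exact hXY (horth j₀ j hne _ (hmem X hX) Y hY)
  exact ⟨himage_eq, fun X' hX' k hk Z hZ => horth j₀ k (Ne.symm hk) _ (hmem X' hX') Z hZ⟩

/-- uniqueness of the target module of `ad(V)` in a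
normalizer-adapted decomposition. -/
theorem ad_image_unique_target
    (𝔤 : Type*) [LieRing 𝔤] [LieAlgebra ℝ 𝔤] [FiniteDimensional ℝ 𝔤]
    (Q : 𝔤 →ₗ[ℝ] 𝔤 →ₗ[ℝ] ℝ)
    (hQsymm : ∀ x y : 𝔤, Q x y = Q y x)
    (hQpos : ∀ x : 𝔤, x ≠ 0 → 0 < Q x x)
    (𝔥 : LieSubalgebra ℝ 𝔤)
    (ℓ : ℕ) (m : Fin ℓ → Submodule ℝ 𝔤)
    (hne : ∀ k, m k ≠ ⊥)
    (horth : ∀ k k', k ≠ k' → ∀ x ∈ m k, ∀ y ∈ m k', Q x y = 0)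
    (hinvar : ∀ k, ∀ H ∈ 𝔥, ∀ x ∈ m k, ⁅H, x⁆ ∈ m k)
    (hirr : ∀ k, ∀ U : Submodule ℝ 𝔤, U ≤ m k →
      (∀ H ∈ 𝔥, ∀ u ∈ U, ⁅H, u⁆ ∈ U) → U = ⊥ ∨ U = m k)
    (V : 𝔤) (hV : ∀ H ∈ 𝔥, ⁅H, V⁆ = 0)
    (i j : Fin ℓ)
    (hj₀ : ∃ j₀ : Fin ℓ,
      Submodule.span ℝ {w : 𝔤 | ∃ x ∈ m i, w = ⁅V, x⁆} ⊓ m j₀ ≠ ⊥)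
    (hij : ∃ X ∈ m i, ∃ Y ∈ m j, Q ⁅V, X⁆ Y ≠ 0) :
    Submodule.span ℝ {w : 𝔤 | ∃ x ∈ m i, w = ⁅V, x⁆} = m j ∧
    ∀ X' ∈ m i, ∀ k : Fin ℓ, k ≠ j → ∀ Z ∈ m k, Q ⁅V, X'⁆ Z = 0 :=
  ad_image_unique_target_general 𝔤 Q 𝔥 ℓ m horth hinvar hirr V hV i j hj₀ hij
end

section
/- Assume: (i) T(p,q,k) = 0 whenever p ≤ s and q ≤ s (for every k); (ii) for every q ≤ s, c_q = Σ_{j>s} Σ_{k>s} T(q,j,k); (iii) the scalar curvature is positive: (1/2)·Σ_{i=1}^{ℓ} c_i/x_i − (1/4)·Σ_{i,j,k=1}^{ℓ} T(i,j,k)·x_i/(x_j·x_k) > 0. Then Σ_{j,k,r > s} T(j,k,r)·x_j/(x_k·x_r) < 2·Σ_{j>s} c_j/x_j, and consequently Σ_{j,k,r > s} T(j,k,r)·x_j/(x_k·x_r) ≤ 2·(Σ_{i=1}^{ℓ} c_i) / min_{s < j ≤ ℓ} x_j. -/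
/-!
Write `S(P, Q, R) = ∑_{i ∈ P, j ∈ Q, k ∈ R} T i j k · x_i / (x_j x_k)` and split the index range
into the toral block `A` and the non-toral block `B`. All terms are nonnegative, so the full sum
dominates `S(B, B, B) + S(B, A, B) + S(B, B, A)`, and the last two pieces are equal by symmetry of
`T`. Pairing the terms `(i, q, k)` and `(k, q, i)` and using `x_i / x_k + x_k / x_i ≥ 2` together
with the Wang–Ziller identity gives `S(B, A, B) ≥ ∑_{q ∈ A} c_q / x_q`. Positivity of the scalar
curvature says `S(A ∪ B, A ∪ B, A ∪ B) < 2 ∑ c_i / x_i`, and the toral part of the right-hand side cancels.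
-/

open Finset

lemma two_mul_div_le_mul_div_add_mul_div {t a b u : ℝ} (ht : 0 ≤ t) (ha : 0 < a) (hb : 0 < b)
    (hu : 0 < u) : 2 * (t / u) ≤ t * a / (u * b) + t * b / (u * a) := by
  have key : t * a / (u * b) + t * b / (u * a) - 2 * (t / u) = t * (a - b) ^ 2 / (u * a * b) := by
    field_simp
    ring
  have : 0 ≤ t * (a - b) ^ 2 / (u * a * b) := by positivity
  linarith

lemma sum_sum_div_le_sum_sum_mul_div {ι : Type*} {B : Finset ι} {x : ι → ℝ} {g : ι → ι → ℝ}
    {u : ℝ} (hg : ∀ i k, 0 ≤ g i k) (hsymm : ∀ i k, g i k = g k i) (hx : ∀ i ∈ B, 0 < x i)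
    (hu : 0 < u) :
    (∑ i ∈ B, ∑ k ∈ B, g i k) / u ≤ ∑ i ∈ B, ∑ k ∈ B, g i k * x i / (u * x k) := by
  have hswap : ∑ i ∈ B, ∑ k ∈ B, g i k * x k / (u * x i)
      = ∑ i ∈ B, ∑ k ∈ B, g i k * x i / (u * x k) := by
    rw [sum_comm]
    exact sum_congr rfl fun i _ => sum_congr rfl fun k _ => by rw [hsymm]
  have hpair : 2 * ((∑ i ∈ B, ∑ k ∈ B, g i k) / u)
      ≤ ∑ i ∈ B, ∑ k ∈ B, (g i k * x i / (u * x k) + g i k * x k / (u * x i)) := by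
    simp only [sum_div, mul_sum]
    exact sum_le_sum fun i hi => sum_le_sum fun k hk =>
      two_mul_div_le_mul_div_add_mul_div (hg i k) (hx i hi) (hx k hk) hu
  simp only [sum_add_distrib, hswap] at hpair
  linarith

section TripleSum

variable {ι : Type*} (T : ι → ι → ι → ℝ) (x : ι → ℝ)

noncomputable def tripleSum (P Q R : Finset ι) : ℝ :=
  ∑ i ∈ P, ∑ j ∈ Q, ∑ k ∈ R, T i j k * x i / (x j * x k)

variable {T x}

lemma tripleSum_nonneg {U P Q R : Finset ι} (hT : ∀ i j k, 0 ≤ T i j k)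
    (hx : ∀ i ∈ U, 0 < x i) (hP : P ⊆ U) (hQ : Q ⊆ U) (hR : R ⊆ U) :
    0 ≤ tripleSum T x P Q R :=
  sum_nonneg fun i hi => sum_nonneg fun j hj => sum_nonneg fun k hk =>
    div_nonneg (mul_nonneg (hT i j k) (hx i (hP hi)).le)
      (mul_pos (hx j (hQ hj)) (hx k (hR hk))).le

lemma tripleSum_comm_right (hT : ∀ i j k, T i j k = T i k j) (P Q R : Finset ι) :
    tripleSum T x P Q R = tripleSum T x P R Q := by
  refine sum_congr rfl fun i _ => ?_
  rw [sum_comm]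
  exact sum_congr rfl fun k _ => sum_congr rfl fun j _ => by rw [hT, mul_comm (x j)]

lemma tripleSum_add_le_tripleSum_union [DecidableEq ι] {A B : Finset ι} (hAB : Disjoint A B)
    (hT : ∀ i j k, 0 ≤ T i j k) (hx : ∀ i ∈ A ∪ B, 0 < x i) :
    tripleSum T x B A B + tripleSum T x B B A + tripleSum T x B B B
      ≤ tripleSum T x (A ∪ B) (A ∪ B) (A ∪ B) := by
  have hA : A ⊆ A ∪ B := subset_union_left
  have hB : B ⊆ A ∪ B := subset_union_right
  have h₁ := tripleSum_nonneg hT hx hA hA hA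
  have h₂ := tripleSum_nonneg hT hx hA hA hB
  have h₃ := tripleSum_nonneg hT hx hA hB hA
  have h₄ := tripleSum_nonneg hT hx hA hB hB
  have h₅ := tripleSum_nonneg hT hx hB hA hA
  simp only [tripleSum, sum_union hAB, sum_add_distrib] at *
  linarith

lemma sum_div_le_tripleSum {A B : Finset ι} {c : ι → ℝ} (hT : ∀ i j k, 0 ≤ T i j k)
    (hT₁ : ∀ i j k, T i j k = T j i k) (hT₂ : ∀ i j k, T i j k = T i k j)
    (hxA : ∀ q ∈ A, 0 < x q) (hxB : ∀ i ∈ B, 0 < x i)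
    (hc : ∀ q ∈ A, c q = ∑ j ∈ B, ∑ k ∈ B, T q j k) :
    ∑ q ∈ A, c q / x q ≤ tripleSum T x B A B := by
  rw [tripleSum, sum_comm]
  refine sum_le_sum fun q hq => ?_
  have hcq : c q = ∑ i ∈ B, ∑ k ∈ B, T i q k := by
    simp only [hc q hq, hT₁ q]
  rw [hcq]
  exact sum_sum_div_le_sum_sum_mul_div (fun i k => hT i q k)
    (fun i k => by rw [hT₁, hT₂, hT₁]) hxB (hxA q hq)

lemma tripleSum_lt_of_tripleSum_union_lt [DecidableEq ι] {A B : Finset ι} {c : ι → ℝ} (hAB : Disjoint A B)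
    (hx : ∀ i ∈ A ∪ B, 0 < x i) (hT : ∀ i j k, 0 ≤ T i j k)
    (hT₁ : ∀ i j k, T i j k = T j i k) (hT₂ : ∀ i j k, T i j k = T i k j)
    (hc : ∀ q ∈ A, c q = ∑ j ∈ B, ∑ k ∈ B, T q j k)
    (hscal : tripleSum T x (A ∪ B) (A ∪ B) (A ∪ B) < 2 * ∑ i ∈ A ∪ B, c i / x i) :
    tripleSum T x B B B < 2 * ∑ j ∈ B, c j / x j := by
  have hsplit := tripleSum_add_le_tripleSum_union hAB hT hx
  have htoral := sum_div_le_tripleSum hT hT₁ hT₂ (fun q hq => hx q (mem_union_left B hq))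
    (fun i hi => hx i (mem_union_right A hi)) hc
  rw [tripleSum_comm_right hT₂ B B A] at hsplit
  rw [sum_union hAB] at hscal
  linarith

end TripleSum

lemma sum_div_le_sum_div_inf' {ι : Type*} {B : Finset ι} (hB : B.Nonempty) {c x : ι → ℝ}
    (hc : ∀ i ∈ B, 0 ≤ c i) (hx : ∀ i ∈ B, 0 < x i) :
    ∑ i ∈ B, c i / x i ≤ (∑ i ∈ B, c i) / B.inf' hB x := by
  have hm : 0 < B.inf' hB x := (lt_inf'_iff hB).2 hx
  rw [sum_div]
  exact sum_le_sum fun i hi => div_le_div_of_nonneg_left (hc i hi) hm (inf'_le x hi)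

lemma Nat.Icc_eq_Icc_union_Icc_succ {a s b : ℕ} (ha : a ≤ s + 1) (hb : s ≤ b) :
    Icc a b = Icc a s ∪ Icc (s + 1) b := by
  ext; simp only [mem_union, mem_Icc]; omega

lemma Nat.disjoint_Icc_Icc_succ (a s b : ℕ) : Disjoint (Icc a s) (Icc (s + 1) b) :=
  disjoint_left.2 fun i hi hi' => by simp only [mem_Icc] at hi hi'; omega

theorem nontoral_terms_bound_general
    (ℓ s : ℕ) (hsl : s < ℓ)
    (x : ℕ → ℝ) (T : ℕ → ℕ → ℕ → ℝ) (c : ℕ → ℝ)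
    (hx : ∀ i ∈ Finset.Icc 1 ℓ, 0 < x i)
    (hT : ∀ i j k, 0 ≤ T i j k)
    (hTsymm₁ : ∀ i j k, T i j k = T j i k)
    (hTsymm₂ : ∀ i j k, T i j k = T i k j)
    (hc : ∀ i, 0 ≤ c i)
    (hWZ : ∀ q ∈ Finset.Icc 1 s,
      c q = ∑ j ∈ Finset.Icc (s + 1) ℓ, ∑ k ∈ Finset.Icc (s + 1) ℓ, T q j k)
    (hscal : 0 < (1 / 2) * ∑ i ∈ Finset.Icc 1 ℓ, c i / x i
      - (1 / 4) * ∑ i ∈ Finset.Icc 1 ℓ, ∑ j ∈ Finset.Icc 1 ℓ,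
          ∑ k ∈ Finset.Icc 1 ℓ, T i j k * x i / (x j * x k)) :
    (∑ j ∈ Finset.Icc (s + 1) ℓ, ∑ k ∈ Finset.Icc (s + 1) ℓ,
        ∑ r ∈ Finset.Icc (s + 1) ℓ, T j k r * x j / (x k * x r)
      < 2 * ∑ j ∈ Finset.Icc (s + 1) ℓ, c j / x j) ∧
    ∑ j ∈ Finset.Icc (s + 1) ℓ, ∑ k ∈ Finset.Icc (s + 1) ℓ,
        ∑ r ∈ Finset.Icc (s + 1) ℓ, T j k r * x j / (x k * x r)
      ≤ 2 * (∑ i ∈ Finset.Icc 1 ℓ, c i) /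
          (Finset.Icc (s + 1) ℓ).inf' (Finset.nonempty_Icc.mpr hsl) x := by
  have hU := Nat.Icc_eq_Icc_union_Icc_succ (Nat.le_add_left 1 s) hsl.le
  have hBU : Icc (s + 1) ℓ ⊆ Icc 1 ℓ := hU ▸ subset_union_right
  have hxB : ∀ i ∈ Icc (s + 1) ℓ, 0 < x i := fun i hi => hx i (hBU hi)
  have hnontoral : tripleSum T x (Icc (s + 1) ℓ) (Icc (s + 1) ℓ) (Icc (s + 1) ℓ)
      < 2 * ∑ j ∈ Icc (s + 1) ℓ, c j / x j := by
    rw [hU] at hx hscal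
    refine tripleSum_lt_of_tripleSum_union_lt (Nat.disjoint_Icc_Icc_succ 1 s ℓ) hx hT hTsymm₁
      hTsymm₂ hWZ ?_
    rw [tripleSum]
    linarith
  refine ⟨hnontoral, hnontoral.le.trans ?_⟩
  rw [mul_div_assoc]
  gcongr
  calc ∑ j ∈ Icc (s + 1) ℓ, c j / x j
      ≤ (∑ j ∈ Icc (s + 1) ℓ, c j) / (Icc (s + 1) ℓ).inf' (nonempty_Icc.mpr hsl) x :=
        sum_div_le_sum_div_inf' _ (fun i _ => hc i) hxB
    _ ≤ (∑ i ∈ Icc 1 ℓ, c i) / (Icc (s + 1) ℓ).inf' (nonempty_Icc.mpr hsl) x := by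
        gcongr
        · exact (lt_inf'_iff _).2 hxB |>.le
        · exact fun i _ _ => hc i

/-- the algebraic content of the scalar-curvature estimate bounding
the purely non-toral curvature terms. -/
theorem nontoral_terms_bound
    (ℓ s : ℕ) (hs : 1 ≤ s) (hsl : s < ℓ)
    (x : ℕ → ℝ) (T : ℕ → ℕ → ℕ → ℝ) (c : ℕ → ℝ)
    (hx : ∀ i ∈ Finset.Icc 1 ℓ, 0 < x i)
    (hT : ∀ i j k, 0 ≤ T i j k)
    (hTsymm₁ : ∀ i j k, T i j k = T j i k)
    (hTsymm₂ : ∀ i j k, T i j k = T i k j)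
    (hc : ∀ i, 0 ≤ c i)
    (htoral : ∀ p ∈ Finset.Icc 1 s, ∀ q ∈ Finset.Icc 1 s,
      ∀ k, T p q k = 0)
    (hWZ : ∀ q ∈ Finset.Icc 1 s,
      c q = ∑ j ∈ Finset.Icc (s + 1) ℓ, ∑ k ∈ Finset.Icc (s + 1) ℓ, T q j k)
    (hscal : 0 < (1 / 2) * ∑ i ∈ Finset.Icc 1 ℓ, c i / x i
      - (1 / 4) * ∑ i ∈ Finset.Icc 1 ℓ, ∑ j ∈ Finset.Icc 1 ℓ,
          ∑ k ∈ Finset.Icc 1 ℓ, T i j k * x i / (x j * x k)) :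
    (∑ j ∈ Finset.Icc (s + 1) ℓ, ∑ k ∈ Finset.Icc (s + 1) ℓ,
        ∑ r ∈ Finset.Icc (s + 1) ℓ, T j k r * x j / (x k * x r)
      < 2 * ∑ j ∈ Finset.Icc (s + 1) ℓ, c j / x j) ∧
    ∑ j ∈ Finset.Icc (s + 1) ℓ, ∑ k ∈ Finset.Icc (s + 1) ℓ,
        ∑ r ∈ Finset.Icc (s + 1) ℓ, T j k r * x j / (x k * x r)
      ≤ 2 * (∑ i ∈ Finset.Icc 1 ℓ, c i) /
          (Finset.Icc (s + 1) ℓ).inf' (Finset.nonempty_Icc.mpr hsl) x :=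
  nontoral_terms_bound_general ℓ s hsl x T c hx hT hTsymm₁ hTsymm₂ hc hWZ hscal
end

section
/- Let a, b, c, d be positive reals with max(b/a, a/b) ≥ max(d/c, c/d). Then (b/a − a/b)·(c/a − d/b) ≥ 0, (b/a − a/b)·(b/d − a/c) ≥ 0, and (b/a − a/b)·(1/(a·c) − 1/(b·d)) ≥ 0. -/
/-!
Clearing denominators, each of the three products is a positive multiple of
`(b - a) * (b * c - a * d)` or of `(b - a) * (b * d - a * c)`. If `a ≤ b`, the larger ratio is
`b / a`, and bounding both `d / c` and `c / d` by it gives `a * d ≤ b * c` and `a * c ≤ b * d`;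
the case `b ≤ a` is the same after swapping `a ↔ b` and `c ↔ d`.
-/

lemma cross_le_of_max_ratio_le {a b c d : ℝ} (ha : 0 < a) (hb : 0 < b) (hc : 0 < c)
    (hd : 0 < d) (hab : a ≤ b) (hmax : max (d / c) (c / d) ≤ max (b / a) (a / b)) :
    a * d ≤ b * c ∧ a * c ≤ b * d := by
  have hratio : a / b ≤ b / a := by
    rw [div_le_div_iff₀ hb ha]
    exact mul_le_mul hab hab ha.le hb.le
  rw [max_eq_left hratio, max_le_iff, div_le_div_iff₀ hc ha, div_le_div_iff₀ hd ha] at hmax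
  constructor <;> linarith [hmax.1, hmax.2]

lemma sign_cross_of_max_ratio_le {a b c d : ℝ} (ha : 0 < a) (hb : 0 < b) (hc : 0 < c)
    (hd : 0 < d) (hmax : max (d / c) (c / d) ≤ max (b / a) (a / b)) :
    0 ≤ (b - a) * (b * c - a * d) ∧ 0 ≤ (b - a) * (b * d - a * c) := by
  rcases le_total a b with hab | hba
  · obtain ⟨h₁, h₂⟩ := cross_le_of_max_ratio_le ha hb hc hd hab hmax
    exact ⟨mul_nonneg (by linarith) (by linarith), mul_nonneg (by linarith) (by linarith)⟩
  · rw [max_comm (d / c), max_comm (b / a)] at hmax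
    obtain ⟨h₁, h₂⟩ := cross_le_of_max_ratio_le hb ha hd hc hba hmax
    exact ⟨mul_nonneg_of_nonpos_of_nonpos (by linarith) (by linarith),
      mul_nonneg_of_nonpos_of_nonpos (by linarith) (by linarith)⟩

/-- sign lemma for the maximal-ratio index along the flow. -/
theorem maximal_ratio_sign_lemma
    (a b c d : ℝ) (ha : 0 < a) (hb : 0 < b) (hc : 0 < c) (hd : 0 < d)
    (hmax : max (d / c) (c / d) ≤ max (b / a) (a / b)) :
    0 ≤ (b / a - a / b) * (c / a - d / b) ∧
    0 ≤ (b / a - a / b) * (b / d - a / c) ∧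
    0 ≤ (b / a - a / b) * (1 / (a * c) - 1 / (b * d)) := by
  obtain ⟨hbc, hbd⟩ := sign_cross_of_max_ratio_le ha hb hc hd hmax
  have e₁ : (b / a - a / b) * (c / a - d / b) =
      (b - a) * (b * c - a * d) * ((a + b) / (a * b) ^ 2) := by
    field_simp; ring
  have e₂ : (b / a - a / b) * (b / d - a / c) =
      (b - a) * (b * c - a * d) * ((a + b) / (a * b * c * d)) := by
    field_simp; ring
  have e₃ : (b / a - a / b) * (1 / (a * c) - 1 / (b * d)) =
      (b - a) * (b * d - a * c) * ((a + b) / ((a * b) ^ 2 * c * d)) := by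
    field_simp; ring
  rw [e₁, e₂, e₃]
  exact ⟨mul_nonneg hbc (by positivity), mul_nonneg hbc (by positivity),
    mul_nonneg hbd (by positivity)⟩
end

section
/- Let n ≥ 2 and, in the space of functions Fin n → ℝ with standard basis vectors e_1, …, e_n, define the set of positive roots R⁺ := {e_i − e_j : 1 ≤ i < j ≤ n} ∪ {e_i + e_j : 1 ≤ i < j ≤ n}. Then for all α, β ∈ R⁺, at most one of the three vectors α + β, α − β, β − α belongs to R⁺. -/
/-!
Every positive root `e i ± e j` has squared length `2`, so by the parallelogram law
`|α + β|² + |α - β|² = 8` rules out both `α + β` and `α - β` being roots, and by symmetry the same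
holds for `α + β` and `β - α`. Every positive root is lexicographically positive, so `α - β` and
its negative `β - α` cannot both be positive roots.
-/

open Matrix

def typeDPositiveRoots (ι R : Type*) [LinearOrder ι] [Ring R] : Set (ι → R) :=
  {v | ∃ i j : ι, i < j ∧
    (v = Pi.single i 1 - Pi.single j 1 ∨ v = Pi.single i 1 + Pi.single j 1)}

theorem dotProduct_self_add_add_dotProduct_self_sub {ι R : Type*} [Fintype ι] [CommRing R]
    (u v : ι → R) : (u + v) ⬝ᵥ (u + v) + (u - v) ⬝ᵥ (u - v) = 2 * (u ⬝ᵥ u) + 2 * (v ⬝ᵥ v) := by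
  simp only [add_dotProduct, dotProduct_add, sub_dotProduct, dotProduct_sub, dotProduct_comm v u]
  ring

namespace typeDPositiveRoots

variable {ι R : Type*} [LinearOrder ι]

theorem dotProduct_self_eq_two [Fintype ι] [Ring R] {v : ι → R}
    (hv : v ∈ typeDPositiveRoots ι R) : v ⬝ᵥ v = 2 := by
  obtain ⟨i, j, hij, rfl | rfl⟩ := hv <;>
    simp [dotProduct_sub, dotProduct_add, hij.ne, hij.ne', one_add_one_eq_two]

theorem not_add_mem_and_sub_mem [Fintype ι] [CommRing R] [CharZero R] {α β : ι → R}
    (hα : α ∈ typeDPositiveRoots ι R) (hβ : β ∈ typeDPositiveRoots ι R) :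
    ¬(α + β ∈ typeDPositiveRoots ι R ∧ α - β ∈ typeDPositiveRoots ι R) := by
  rintro ⟨hadd, hsub⟩
  have h := dotProduct_self_add_add_dotProduct_self_sub α β
  rw [dotProduct_self_eq_two hadd, dotProduct_self_eq_two hsub, dotProduct_self_eq_two hα,
    dotProduct_self_eq_two hβ] at h
  norm_num at h

theorem toLex_pos [Ring R] [PartialOrder R] [IsStrictOrderedRing R] {v : ι → R}
    (hv : v ∈ typeDPositiveRoots ι R) : 0 < toLex v := by
  obtain ⟨i, j, hij, rfl | rfl⟩ := hv <;>
  · refine ⟨i, fun k (hk : k < i) => ?_, ?_⟩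
    · change (0 : ι → R) k = _
      simp [hk.ne, (hk.trans hij).ne]
    · change (0 : ι → R) i < _
      simp [hij.ne]

theorem neg_notMem [WellFoundedLT ι] [Ring R] [PartialOrder R] [IsStrictOrderedRing R]
    {v : ι → R} (hv : v ∈ typeDPositiveRoots ι R) : -v ∉ typeDPositiveRoots ι R :=
  fun hnv => (toLex_pos hv).asymm (neg_pos.mp (toLex_pos hnv))

end typeDPositiveRoots

theorem typeD_roots_at_most_one_general
    (n : ℕ) :
    ∀ α ∈ {v : Fin n → ℝ | ∃ i j : Fin n, i < j ∧
        (v = Pi.single i (1 : ℝ) - Pi.single j (1 : ℝ) ∨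
         v = Pi.single i (1 : ℝ) + Pi.single j (1 : ℝ))},
    ∀ β ∈ {v : Fin n → ℝ | ∃ i j : Fin n, i < j ∧
        (v = Pi.single i (1 : ℝ) - Pi.single j (1 : ℝ) ∨
         v = Pi.single i (1 : ℝ) + Pi.single j (1 : ℝ))},
      ¬(α + β ∈ {v : Fin n → ℝ | ∃ i j : Fin n, i < j ∧
            (v = Pi.single i (1 : ℝ) - Pi.single j (1 : ℝ) ∨
             v = Pi.single i (1 : ℝ) + Pi.single j (1 : ℝ))} ∧
        α - β ∈ {v : Fin n → ℝ | ∃ i j : Fin n, i < j ∧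
            (v = Pi.single i (1 : ℝ) - Pi.single j (1 : ℝ) ∨
             v = Pi.single i (1 : ℝ) + Pi.single j (1 : ℝ))}) ∧
      ¬(α + β ∈ {v : Fin n → ℝ | ∃ i j : Fin n, i < j ∧
            (v = Pi.single i (1 : ℝ) - Pi.single j (1 : ℝ) ∨
             v = Pi.single i (1 : ℝ) + Pi.single j (1 : ℝ))} ∧
        β - α ∈ {v : Fin n → ℝ | ∃ i j : Fin n, i < j ∧
            (v = Pi.single i (1 : ℝ) - Pi.single j (1 : ℝ) ∨
             v = Pi.single i (1 : ℝ) + Pi.single j (1 : ℝ))}) ∧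
      ¬(α - β ∈ {v : Fin n → ℝ | ∃ i j : Fin n, i < j ∧
            (v = Pi.single i (1 : ℝ) - Pi.single j (1 : ℝ) ∨
             v = Pi.single i (1 : ℝ) + Pi.single j (1 : ℝ))} ∧
        β - α ∈ {v : Fin n → ℝ | ∃ i j : Fin n, i < j ∧
            (v = Pi.single i (1 : ℝ) - Pi.single j (1 : ℝ) ∨
             v = Pi.single i (1 : ℝ) + Pi.single j (1 : ℝ))}) := by
  intro α hα β hβ
  refine ⟨typeDPositiveRoots.not_add_mem_and_sub_mem hα hβ, ?_, ?_⟩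
  · rw [add_comm]
    exact typeDPositiveRoots.not_add_mem_and_sub_mem hβ hα
  · rw [← neg_sub α β]
    exact fun ⟨hsub, hneg⟩ => typeDPositiveRoots.neg_notMem hsub hneg

/-- for the positive roots of the root system of type D, at most
one of `α + β`, `α - β`, `β - α` is again a positive root. -/
theorem typeD_roots_at_most_one
    (n : ℕ) (hn : 2 ≤ n) :
    ∀ α ∈ {v : Fin n → ℝ | ∃ i j : Fin n, i < j ∧
        (v = Pi.single i (1 : ℝ) - Pi.single j (1 : ℝ) ∨
         v = Pi.single i (1 : ℝ) + Pi.single j (1 : ℝ))},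
    ∀ β ∈ {v : Fin n → ℝ | ∃ i j : Fin n, i < j ∧
        (v = Pi.single i (1 : ℝ) - Pi.single j (1 : ℝ) ∨
         v = Pi.single i (1 : ℝ) + Pi.single j (1 : ℝ))},
      ¬(α + β ∈ {v : Fin n → ℝ | ∃ i j : Fin n, i < j ∧
            (v = Pi.single i (1 : ℝ) - Pi.single j (1 : ℝ) ∨
             v = Pi.single i (1 : ℝ) + Pi.single j (1 : ℝ))} ∧
        α - β ∈ {v : Fin n → ℝ | ∃ i j : Fin n, i < j ∧
            (v = Pi.single i (1 : ℝ) - Pi.single j (1 : ℝ) ∨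
             v = Pi.single i (1 : ℝ) + Pi.single j (1 : ℝ))}) ∧
      ¬(α + β ∈ {v : Fin n → ℝ | ∃ i j : Fin n, i < j ∧
            (v = Pi.single i (1 : ℝ) - Pi.single j (1 : ℝ) ∨
             v = Pi.single i (1 : ℝ) + Pi.single j (1 : ℝ))} ∧
        β - α ∈ {v : Fin n → ℝ | ∃ i j : Fin n, i < j ∧
            (v = Pi.single i (1 : ℝ) - Pi.single j (1 : ℝ) ∨
             v = Pi.single i (1 : ℝ) + Pi.single j (1 : ℝ))}) ∧
      ¬(α - β ∈ {v : Fin n → ℝ | ∃ i j : Fin n, i < j ∧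
            (v = Pi.single i (1 : ℝ) - Pi.single j (1 : ℝ) ∨
             v = Pi.single i (1 : ℝ) + Pi.single j (1 : ℝ))} ∧
        β - α ∈ {v : Fin n → ℝ | ∃ i j : Fin n, i < j ∧
            (v = Pi.single i (1 : ℝ) - Pi.single j (1 : ℝ) ∨
             v = Pi.single i (1 : ℝ) + Pi.single j (1 : ℝ))}) :=
  typeD_roots_at_most_one_general n
end
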